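/- Consider the kinetic finite-volume scheme for the homogeneous multilayer Saint-Venant system on cells i∈ℤ with sizes Δx_i>0: given states H_i^n ≥ 0 and u_{α,i}^n, set c_i^n = √(gH_i^n/2), define the layer mass fluxes F_{h_α,i+1/2} = F⁺_{h_α}(X_i^n) + F⁻_{h_α}(X_{i+1}^n) with F⁺_{h_α}(X) = l_α H ∫_{u_α+wc≥0}(u_α+wc)χ(w)dw and F⁻_{h_α}(X) = l_α H ∫_{u_α+wc<0}(u_α+wc)χ(w)dw, set 𝓕_{h_α,i} = F_{h_α,i+1/2} − F_{h_α,i−1/2}, update H_i^{n+1} = H_i^n − (Δtⁿ/Δx_i)Σ_{α=1}^N 𝓕_{h_α,i}, and define the discrete exchange terms G_{α+1/2,i} = (1/Δx_i)Σ_{j=1}^{α}(𝓕_{h_j,i} − l_j Σ_{p=1}^N 𝓕_{h_p,i}) for α=1,…,N−1 with G_{1/2,i} = G_{N+1/2,i} = 0. If χ is supported in [−w_M,w_M] and the time step satisfies the CFL condition Δtⁿ·( l_α H_i^n(|u_{α,i}^n| + w_M c_i^n)/Δx_i + [G_{α+1/2,i}]_− + [G_{α−1/2,i}]_+ ) ≤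 l_α H_i^n for every layer α and every cell i (where [x]_+ = max(0,x) and [x]_− = max(0,−x)), then the scheme preserves nonnegativity of the water height: H_i^{n+1} ≥ 0 for all i. -/

import Mathlib

open MeasureTheory

/-- Positive-part kinetic mass flux `F⁺_{h_α}` of a state with water height `Hh`
and layer velocity `uα`, built from the Gibbs equilibrium with profile `χ`. -/
noncomputable def kineticFluxHPlus (g : ℝ) (χ : ℝ → ℝ) (lα Hh uα : ℝ) : ℝ :=
  lα * Hh * ∫ w in {w : ℝ | 0 ≤ uα + w * Real.sqrt (g * Hh / 2)},
    (uα + w * Real.sqrt (g * Hh / 2)) * χ w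

/-- Negative-part kinetic mass flux `F⁻_{h_α}`. -/
noncomputable def kineticFluxHMinus (g : ℝ) (χ : ℝ → ℝ) (lα Hh uα : ℝ) : ℝ :=
  lα * Hh * ∫ w in {w : ℝ | uα + w * Real.sqrt (g * Hh / 2) < 0},
    (uα + w * Real.sqrt (g * Hh / 2)) * χ w

/-! The update splits layer by layer: since `∑ l α = 1` and the exchange terms telescope
(`G 0 = G N = 0`), `Hⁿ⁺¹ᵢ = ∑ α, (l α Hᵢ - Δt/Δxᵢ 𝓕 α i + Δt (G (α+1) i - G α i))`.
In each summand the inflowing fluxes `F⁺(Xᵢ₋₁) ≥ 0` and `F⁻(Xᵢ₊₁) ≤ 0` only help, and the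
outflow `F⁺(Xᵢ) - F⁻(Xᵢ) = l α Hᵢ ∫ |u + w c| χ` is at most `l α Hᵢ (|u| + w_M c)` because
`χ` is a probability density supported in `[-w_M, w_M]`; the CFL condition then makes every
summand nonnegative. -/

theorem setIntegral_sub_setIntegral_compl_le_integral_abs {X : Type*} [MeasurableSpace X]
    {μ : Measure X} {f : X → ℝ} {s : Set X} (hs : MeasurableSet s) (hf : Integrable f μ) :
    ∫ x in s, f x ∂μ - ∫ x in sᶜ, f x ∂μ ≤ ∫ x, |f x| ∂μ := by
  have hs_le : ∫ x in s, f x ∂μ ≤ ∫ x in s, |f x| ∂μ :=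
    setIntegral_mono hf.integrableOn hf.abs.integrableOn fun x => le_abs_self _
  have hsc_le : -∫ x in sᶜ, f x ∂μ ≤ ∫ x in sᶜ, |f x| ∂μ := by
    rw [← integral_neg]
    exact setIntegral_mono hf.neg.integrableOn hf.abs.integrableOn fun x => neg_le_abs _
  linarith [integral_add_compl hs hf.abs]

theorem Fin.sum_univ_telescope {M : Type*} [AddCommGroup M] (N : ℕ) (G : ℕ → M) :
    ∑ α : Fin N, (G (α + 1) - G α) = G N - G 0 := by
  rw [Fin.sum_univ_eq_sum_range (fun k => G (k + 1) - G k), Finset.sum_range_sub]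

section KineticFlux

variable {χ : ℝ → ℝ} {wM : ℝ}

theorem abs_add_mul_mul_le_of_support (hχpos : ∀ w, 0 ≤ χ w)
    (hχM : ∀ w, χ w ≠ 0 → |w| ≤ wM) {c : ℝ} (hc : 0 ≤ c) (u w : ℝ) :
    |(u + w * c) * χ w| ≤ (|u| + wM * c) * χ w := by
  rcases eq_or_ne (χ w) 0 with hχw | hχw
  · simp [hχw]
  rw [abs_mul, abs_of_nonneg (hχpos w)]
  refine mul_le_mul_of_nonneg_right ?_ (hχpos w)
  calc |u + w * c| ≤ |u| + |w| * c := by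
        simpa [abs_mul, abs_of_nonneg hc] using abs_add_le u (w * c)
    _ ≤ |u| + wM * c := by gcongr; exact hχM w hχw

theorem integrable_add_mul_mul_of_support (hχint : Integrable χ) (hχpos : ∀ w, 0 ≤ χ w)
    (hχM : ∀ w, χ w ≠ 0 → |w| ≤ wM) {c : ℝ} (hc : 0 ≤ c) (u : ℝ) :
    Integrable (fun w => (u + w * c) * χ w) :=
  (hχint.const_mul (|u| + wM * c)).mono'
    ((by fun_prop : Continuous fun w : ℝ => u + w * c).aestronglyMeasurable.mul
      hχint.aestronglyMeasurable)
    (Filter.Eventually.of_forall (abs_add_mul_mul_le_of_support hχpos hχM hc u))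

theorem integral_abs_add_mul_mul_le (hχint : Integrable χ) (hχpos : ∀ w, 0 ≤ χ w)
    (hχM : ∀ w, χ w ≠ 0 → |w| ≤ wM) {c : ℝ} (hc : 0 ≤ c) (u : ℝ) :
    ∫ w, |(u + w * c) * χ w| ≤ (|u| + wM * c) * ∫ w, χ w := by
  rw [← integral_const_mul]
  exact integral_mono (integrable_add_mul_mul_of_support hχint hχpos hχM hc u).abs
    (hχint.const_mul _) (abs_add_mul_mul_le_of_support hχpos hχM hc u)

variable (g : ℝ) {lα Hh : ℝ}

theorem kineticFluxHPlus_nonneg (hχpos : ∀ w, 0 ≤ χ w) (hl : 0 ≤ lα) (hH : 0 ≤ Hh) (uα : ℝ) :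
    0 ≤ kineticFluxHPlus g χ lα Hh uα :=
  mul_nonneg (mul_nonneg hl hH) <|
    setIntegral_nonneg (measurableSet_le measurable_const (by fun_prop))
      fun w hw => mul_nonneg hw (hχpos w)

theorem kineticFluxHMinus_nonpos (hχpos : ∀ w, 0 ≤ χ w) (hl : 0 ≤ lα) (hH : 0 ≤ Hh) (uα : ℝ) :
    kineticFluxHMinus g χ lα Hh uα ≤ 0 :=
  mul_nonpos_of_nonneg_of_nonpos (mul_nonneg hl hH) <|
    setIntegral_nonpos (measurableSet_lt (by fun_prop) measurable_const)
      fun w hw => mul_nonpos_of_nonpos_of_nonneg (le_of_lt hw) (hχpos w)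

theorem kineticFluxHPlus_sub_kineticFluxHMinus_le (hχint : Integrable χ)
    (hχpos : ∀ w, 0 ≤ χ w) (hχ0 : ∫ w, χ w = 1) (hχM : ∀ w, χ w ≠ 0 → |w| ≤ wM)
    (hl : 0 ≤ lα) (hH : 0 ≤ Hh) (uα : ℝ) :
    kineticFluxHPlus g χ lα Hh uα - kineticFluxHMinus g χ lα Hh uα
      ≤ lα * Hh * (|uα| + wM * Real.sqrt (g * Hh / 2)) := by
  set c := Real.sqrt (g * Hh / 2)
  have hc : 0 ≤ c := Real.sqrt_nonneg _
  have hcompl : {w : ℝ | uα + w * c < 0} = {w : ℝ | 0 ≤ uα + w * c}ᶜ := by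
    ext w; simp
  have hsplit := setIntegral_sub_setIntegral_compl_le_integral_abs
    (measurableSet_le (by fun_prop) (by fun_prop) : MeasurableSet {w : ℝ | 0 ≤ uα + w * c})
    (integrable_add_mul_mul_of_support hχint hχpos hχM hc uα)
  have hbound := integral_abs_add_mul_mul_le hχint hχpos hχM hc uα
  rw [hχ0, mul_one] at hbound
  rw [kineticFluxHPlus, kineticFluxHMinus, hcompl, ← mul_sub]
  exact mul_le_mul_of_nonneg_left (hsplit.trans hbound) (mul_nonneg hl hH)

end KineticFlux

theorem layer_update_nonneg {m Δt Δx F B Gup Gdown : ℝ} (hΔt : 0 ≤ Δt) (hΔx : 0 < Δx)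
    (hF : F ≤ B) (hCFL : Δt * (B / Δx + max 0 (-Gup) + max 0 Gdown) ≤ m) :
    0 ≤ m - Δt / Δx * F + Δt * (Gup - Gdown) := by
  have hflux : Δt / Δx * F ≤ Δt * (B / Δx) := by
    rw [div_mul_eq_mul_div, mul_div_assoc]
    gcongr
  have hup : Δt * -Gup ≤ Δt * max 0 (-Gup) := by gcongr; exact le_max_right _ _
  have hdown : Δt * Gdown ≤ Δt * max 0 Gdown := by gcongr; exact le_max_right _ _
  linarith

-- Layer `α : Fin N` lies between the interfaces `α` and `α + 1` of the exchange terms `G`.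
theorem multilayer_scheme_positivity_general
    (N : ℕ) (g : ℝ)
    (l : Fin N → ℝ) (hl : ∀ α, 0 < l α) (hlsum : ∑ α, l α = 1)
    (χ : ℝ → ℝ) (hχint : Integrable χ)
    (hχpos : ∀ w, 0 ≤ χ w)
    (hχ0 : (∫ w, χ w) = 1)
    (wM : ℝ)
    (hχM : ∀ w, χ w ≠ 0 → |w| ≤ wM)
    (Δt : ℝ) (hΔt : 0 < Δt) (Δx : ℤ → ℝ) (hΔx : ∀ i, 0 < Δx i)
    (H : ℤ → ℝ) (u : Fin N → ℤ → ℝ)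
    (hHpos : ∀ i, 0 ≤ H i)
    -- numerical mass fluxes at the interfaces i+1/2 and their differences
    (Fh : Fin N → ℤ → ℝ) (𝓕 : Fin N → ℤ → ℝ)
    (hFh : ∀ α i, Fh α i =
      kineticFluxHPlus g χ (l α) (H i) (u α i)
        + kineticFluxHMinus g χ (l α) (H (i + 1)) (u α (i + 1)))
    (h𝓕 : ∀ α i, 𝓕 α i = Fh α i - Fh α (i - 1))
    -- discrete mass-exchange terms
    (G : ℕ → ℤ → ℝ)
    (hG : ∀ k i, G k i = (1 / Δx i) *
      ∑ j ∈ Finset.univ.filter (fun j : Fin N => (j : ℕ) < k),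
        (𝓕 j i - l j * ∑ p, 𝓕 p i))
    -- updated water height
    (Hnew : ℤ → ℝ)
    (hHnew : ∀ i, Hnew i = H i - Δt / Δx i * ∑ α, 𝓕 α i)
    -- CFL condition
    (hCFL : ∀ (α : Fin N) (i : ℤ),
      Δt * (l α * H i * (|u α i| + wM * Real.sqrt (g * H i / 2)) / Δx i
          + max 0 (-(G ((α : ℕ) + 1) i)) + max 0 (G (α : ℕ) i))
        ≤ l α * H i) :
    ∀ i, 0 ≤ Hnew i := by
  intro i
  have hflux : ∀ α, 𝓕 α i ≤ l α * H i * (|u α i| + wM * Real.sqrt (g * H i / 2)) := by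
    intro α
    have hl' := (hl α).le
    rw [h𝓕, hFh, hFh, sub_add_cancel]
    linarith [kineticFluxHPlus_nonneg g hχpos hl' (hHpos (i - 1)) (u α (i - 1)),
      kineticFluxHMinus_nonpos g hχpos hl' (hHpos (i + 1)) (u α (i + 1)),
      kineticFluxHPlus_sub_kineticFluxHMinus_le g hχint hχpos hχ0 hχM hl' (hHpos i) (u α i)]
  have hG0 : G 0 i = 0 := by simp [hG]
  have hGN : G N i = 0 := by
    rw [hG, Finset.filter_true_of_mem fun j _ => j.isLt, Finset.sum_sub_distrib,
      ← Finset.sum_mul, hlsum, one_mul, sub_self, mul_zero]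
  have hlayers : Hnew i = ∑ α : Fin N,
      (l α * H i - Δt / Δx i * 𝓕 α i + Δt * (G ((α : ℕ) + 1) i - G (α : ℕ) i)) := by
    rw [hHnew, Finset.sum_add_distrib, Finset.sum_sub_distrib, ← Finset.sum_mul, hlsum,
      ← Finset.mul_sum, ← Finset.mul_sum, Fin.sum_univ_telescope N (G · i), hGN, hG0]
    ring
  rw [hlayers]
  exact Finset.sum_nonneg fun α _ =>
    layer_update_nonneg hΔt.le (hΔx i) (hflux α) (hCFL α i)

/-- Under the CFL condition taking into account both the horizontal kinetic
fluxes and the vertical mass exchanges, the kinetic finite-volume scheme for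
the homogeneous multilayer Saint-Venant system keeps the water height
nonnegative. Layers are 0-based: layer `α : Fin N` has lower interface `α` and
upper interface `α + 1`, with discrete exchange terms `G k i`. -/
theorem multilayer_scheme_positivity
    (N : ℕ) (hN : 1 ≤ N) (g : ℝ) (hg : 0 < g)
    (l : Fin N → ℝ) (hl : ∀ α, 0 < l α) (hlsum : ∑ α, l α = 1)
    (χ : ℝ → ℝ) (hχint : Integrable χ)
    (hχeven : ∀ w, χ (-w) = χ w) (hχpos : ∀ w, 0 ≤ χ w)
    (hχ0 : (∫ w, χ w) = 1) (hχ2 : (∫ w, w ^ 2 * χ w) = 1)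
    (wM : ℝ) (hwM : 0 ≤ wM)
    (hχM : ∀ w, χ w ≠ 0 → |w| ≤ wM)
    (Δt : ℝ) (hΔt : 0 < Δt) (Δx : ℤ → ℝ) (hΔx : ∀ i, 0 < Δx i)
    (H : ℤ → ℝ) (u : Fin N → ℤ → ℝ)
    (hHpos : ∀ i, 0 ≤ H i)
    -- numerical mass fluxes at the interfaces i+1/2 and their differences
    (Fh : Fin N → ℤ → ℝ) (𝓕 : Fin N → ℤ → ℝ)
    (hFh : ∀ α i, Fh α i =
      kineticFluxHPlus g χ (l α) (H i) (u α i)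
        + kineticFluxHMinus g χ (l α) (H (i + 1)) (u α (i + 1)))
    (h𝓕 : ∀ α i, 𝓕 α i = Fh α i - Fh α (i - 1))
    -- discrete mass-exchange terms
    (G : ℕ → ℤ → ℝ)
    (hG : ∀ k i, G k i = (1 / Δx i) *
      ∑ j ∈ Finset.univ.filter (fun j : Fin N => (j : ℕ) < k),
        (𝓕 j i - l j * ∑ p, 𝓕 p i))
    -- updated water height
    (Hnew : ℤ → ℝ)
    (hHnew : ∀ i, Hnew i = H i - Δt / Δx i * ∑ α, 𝓕 α i)
    -- CFL condition
    (hCFL : ∀ (α : Fin N) (i : ℤ),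
      Δt * (l α * H i * (|u α i| + wM * Real.sqrt (g * H i / 2)) / Δx i
          + max 0 (-(G ((α : ℕ) + 1) i)) + max 0 (G (α : ℕ) i))
        ≤ l α * H i) :
    ∀ i, 0 ≤ Hnew i :=
  multilayer_scheme_positivity_general N g l hl hlsum χ hχint hχpos hχ0 wM hχM Δt hΔt Δx hΔx H u
    hHpos Fh 𝓕 hFh h𝓕 G hG Hnew hHnew hCFL
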